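/- Let a, b, c, x₀, y₀, θ₀ ∈ ℝ, let X = a·E₁₃ + b·E₂₃ + c·(E₂₁ − E₁₂), and let p : ℝ → ℝ² assign to s the pair of entries ((exp(s·X) · M(x₀,y₀,θ₀))₁₃, (exp(s·X) · M(x₀,y₀,θ₀))₂₃) (the (x,y)-projection of the orbit). Then exactly one of the following alternatives holds: (i) p is constant; (ii) there exists a nonzero vector v ∈ ℝ² with Set.range p = (x₀, y₀) +ᵥ (ℝ ∙ v) (a straight line); (iii) there exist a center q ∈ ℝ² and a radius r > 0 with Set.range p equal to the Euclidean circle {z ∈ ℝ² : dist(z, q) = r}. -/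

import Mathlib

open Pointwise

/-- The matrix `M(x, y, θ)` realizing the element `(x, y, θ)` of `SE(2)`. -/
noncomputable def M (x y θ : ℝ) : Matrix (Fin 3) (Fin 3) ℝ :=
  !![Real.cos θ, -Real.sin θ, x; Real.sin θ, Real.cos θ, y; 0, 0, 1]

/-- `E i j`: the 3×3 matrix whose unique nonzero entry is a 1 in row `i`, column `j`
(rows and columns indexed from 1 as `1, 2, 3` ↦ `0, 1, 2`). -/
def E (i j : Fin 3) : Matrix (Fin 3) (Fin 3) ℝ := Matrix.single i j 1

/-- The point `(x, y)` of the Euclidean plane `ℝ²`. -/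
noncomputable def pt (x y : ℝ) : EuclideanSpace ℝ (Fin 2) :=
  (WithLp.equiv 2 (Fin 2 → ℝ)).symm ![x, y]

/-!
Since `X³ = -c² X` for the generator `X`, the exponential is `exp (s X) = 1 + α(s) X + β(s) X²`
with `α = sin (c s) / c`, `β = (1 - cos (c s)) / c²` (or `α = s`, `β = s² / 2` when `c = 0`).
Reading off the translation part: for `c = 0` the projected orbit is `s ↦ (x₀, y₀) + s (a, b)`,
a point or a line; for `c ≠ 0`, in complex notation it is `s ↦ q + e^{i c s} (z₀ - q)` with
`q = i (a + i b) / c` the centre of rotation, a point or a circle. The three shapes exclude each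
other: lines and circles have more than one point, and lines are unbounded.
-/

open Set Metric

theorem exp_smul_eq_of_hasDerivAt {𝔸 : Type*} [NormedRing 𝔸] [NormedAlgebra ℝ 𝔸] [CompleteSpace 𝔸]
    {X : 𝔸} {G : ℝ → 𝔸} (hG0 : G 0 = 1) (hG : ∀ t, HasDerivAt G (X * G t) t) (s : ℝ) :
    G s = NormedSpace.exp (s • X) := by
  have hH : ∀ t, HasDerivAt (fun u : ℝ => NormedSpace.exp ((s - u) • X) * G u) 0 t := fun t => by
    have he := (hasDerivAt_exp_smul_const X (s - t)).scomp t ((hasDerivAt_id t).const_sub s)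
    convert he.mul (hG t) using 1
    · rfl
    · rw [neg_one_smul, neg_mul, mul_assoc, Function.comp_apply, neg_add_cancel]
  simpa [hG0] using is_const_of_deriv_eq_zero (fun u => (hH u).differentiableAt)
    (fun u => (hH u).deriv) s 0

theorem Matrix.exp_smul_eq_of_mul_mul_eq {n : Type*} [Fintype n] [DecidableEq n]
    {X : Matrix n n ℝ} {c : ℝ} (hX : X * X * X = -(c ^ 2) • X) {α β : ℝ → ℝ}
    (hα0 : α 0 = 0) (hβ0 : β 0 = 0)
    (hα : ∀ s, HasDerivAt α (1 - c ^ 2 * β s) s) (hβ : ∀ s, HasDerivAt β (α s) s) (s : ℝ) :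
    NormedSpace.exp (s • X) = 1 + α s • X + β s • (X * X) := by
  let _ := Matrix.linftyOpNormedRing (n := n) (α := ℝ)
  let _ := Matrix.linftyOpNormedAlgebra (n := n) (R := ℝ) (α := ℝ)
  refine (exp_smul_eq_of_hasDerivAt (G := fun u => 1 + α u • X + β u • (X * X))
    (by simp [hα0, hβ0]) (fun t => ?_) s).symm
  have hXG : X * (1 + α t • X + β t • (X * X)) = 0 + (1 - c ^ 2 * β t) • X + α t • (X * X) := by
    rw [mul_add, mul_add, mul_one, mul_smul_comm, mul_smul_comm, ← mul_assoc, hX]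
    module
  rw [hXG]
  exact ((hasDerivAt_const t (1 : Matrix n n ℝ)).add ((hα t).smul_const X)).add
    ((hβ t).smul_const (X * X))

theorem range_add_smul {E : Type*} [AddCommGroup E] [Module ℝ E] (z v : E) :
    range (fun t : ℝ => z + t • v) = z +ᵥ ((ℝ ∙ v : Submodule ℝ E) : Set E) := by
  ext x
  simp [Set.mem_vadd_set, Submodule.mem_span_singleton, eq_comm]

theorem Complex.range_add_exp_mul_I_mul {c : ℝ} (hc : c ≠ 0) (q w : ℂ) :
    range (fun s : ℝ => q + Complex.exp (↑(s * c) * I) * w) = sphere q ‖w‖ := by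
  ext z
  constructor
  · rintro ⟨s, rfl⟩
    rw [mem_sphere_iff_norm, add_sub_cancel_left, norm_mul, norm_exp_ofReal_mul_I, one_mul]
  · intro hz
    rw [mem_sphere_iff_norm] at hz
    refine ⟨(arg (z - q) - arg w) / c, ?_⟩
    have hrot : exp (↑((arg (z - q) - arg w) / c * c) * I) * exp (arg w * I)
        = exp (arg (z - q) * I) := by
      rw [div_mul_cancel₀ _ hc, ← exp_add]; push_cast; ring_nf
    have hzq := norm_mul_exp_arg_mul_I (z - q)
    rw [hz] at hzq
    linear_combination (-exp (↑((arg (z - q) - arg w) / c * c) * I)) * norm_mul_exp_arg_mul_I w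
      + (‖w‖ : ℂ) * hrot + hzq

def IsSphere {X : Type*} [MetricSpace X] (S : Set X) : Prop :=
  ∃ (q : X) (r : ℝ), 0 < r ∧ S = sphere q r

theorem sphere_subsingleton_or_isSphere {X : Type*} [MetricSpace X] (q : X) (r : ℝ) :
    (sphere q r).Subsingleton ∨ IsSphere (sphere q r) := by
  rcases le_or_gt r 0 with hr | hr
  · exact Or.inl (subsingleton_sphere q hr)
  · exact Or.inr ⟨q, r, hr, rfl⟩

section Shapes

variable {E : Type*} [NormedAddCommGroup E] [NormedSpace ℝ E]

def IsLineThrough (z : E) (S : Set E) : Prop :=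
  ∃ v : E, v ≠ 0 ∧ S = z +ᵥ ((ℝ ∙ v : Submodule ℝ E) : Set E)

theorem vadd_span_singleton_subsingleton_or_isLineThrough (z v : E) :
    (z +ᵥ ((ℝ ∙ v : Submodule ℝ E) : Set E)).Subsingleton ∨
      IsLineThrough z (z +ᵥ ((ℝ ∙ v : Submodule ℝ E) : Set E)) := by
  rcases eq_or_ne v 0 with rfl | hv
  · left
    simp
  · exact Or.inr ⟨v, hv, rfl⟩

theorem not_subsingleton_vadd_span_singleton (z : E) {v : E} (hv : v ≠ 0) :
    ¬(z +ᵥ ((ℝ ∙ v : Submodule ℝ E) : Set E)).Subsingleton := by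
  rw [← range_add_smul]
  intro h
  exact hv (by simpa using h ⟨1, rfl⟩ ⟨0, rfl⟩)

theorem not_subsingleton_sphere [Nontrivial E] (q : E) {r : ℝ} (hr : 0 < r) :
    ¬(sphere q r).Subsingleton := by
  obtain ⟨x, hx⟩ := (NormedSpace.sphere_nonempty (x := q)).2 hr.le
  have hx' : q - (x - q) ∈ sphere q r := by
    rw [mem_sphere_iff_norm] at hx ⊢
    rwa [sub_sub_cancel_left, norm_neg]
  have hdist : dist x (q - (x - q)) = 2 * r := by
    rw [dist_eq_norm, show x - (q - (x - q)) = (2 : ℝ) • (x - q) by module, norm_smul,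
      ← dist_eq_norm, mem_sphere.1 hx, Real.norm_two]
  intro h
  rw [← h hx hx', dist_self] at hdist
  linarith

theorem not_isBounded_range_add_smul (z : E) {v : E} (hv : v ≠ 0) :
    ¬Bornology.IsBounded (range fun t : ℝ => z + t • v) := by
  rw [isBounded_iff_forall_norm_le]
  rintro ⟨C, hC⟩
  have hv' : 0 < ‖v‖ := norm_pos_iff.2 hv
  set t := (|C| + ‖z‖ + 1) / ‖v‖
  have ht : ‖t • v‖ = |C| + ‖z‖ + 1 := by
    rw [norm_smul, Real.norm_of_nonneg (by positivity), div_mul_cancel₀ _ hv'.ne']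
  have := norm_sub_le (z + t • v) z
  rw [add_sub_cancel_left, ht] at this
  linarith [hC _ ⟨t, rfl⟩, le_abs_self C]

theorem vadd_span_singleton_ne_sphere (z : E) {v : E} (hv : v ≠ 0) (q : E) (r : ℝ) :
    z +ᵥ ((ℝ ∙ v : Submodule ℝ E) : Set E) ≠ sphere q r := by
  rw [← range_add_smul]
  intro h
  exact not_isBounded_range_add_smul z hv (h ▸ isBounded_sphere)

theorem range_trichotomy [Nontrivial E] (p : ℝ → E) (z : E)
    (h : (range p).Subsingleton ∨ IsLineThrough z (range p) ∨ IsSphere (range p)) :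
    ((∀ s, p s = p 0) ∧ ¬IsLineThrough z (range p) ∧ ¬IsSphere (range p)) ∨
      (¬(∀ s, p s = p 0) ∧ IsLineThrough z (range p) ∧ ¬IsSphere (range p)) ∨
      (¬(∀ s, p s = p 0) ∧ ¬IsLineThrough z (range p) ∧ IsSphere (range p)) := by
  have hconst : (∀ s, p s = p 0) ↔ (range p).Subsingleton := by
    refine ⟨fun hp => ?_, fun hp s => hp ⟨s, rfl⟩ ⟨0, rfl⟩⟩
    rintro _ ⟨s, rfl⟩ _ ⟨t, rfl⟩
    rw [hp s, hp t]
  have hline : IsLineThrough z (range p) → ¬(range p).Subsingleton := by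
    rintro ⟨v, hv, hS⟩
    exact hS ▸ not_subsingleton_vadd_span_singleton z hv
  have hsphere : IsSphere (range p) → ¬(range p).Subsingleton := by
    rintro ⟨q, r, hr, hS⟩
    exact hS ▸ not_subsingleton_sphere q hr
  have hline_sphere : IsLineThrough z (range p) → ¬IsSphere (range p) := by
    rintro ⟨v, hv, hS⟩ ⟨q, r, -, hS'⟩
    exact vadd_span_singleton_ne_sphere z hv q r (hS.symm.trans hS')
  rw [hconst]
  tauto

end Shapes

def se2Generator (a b c : ℝ) : Matrix (Fin 3) (Fin 3) ℝ :=
  a • E 0 2 + b • E 1 2 + c • (E 1 0 - E 0 1)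

theorem se2Generator_eq (a b c : ℝ) : se2Generator a b c = !![0, -c, a; c, 0, b; 0, 0, 0] := by
  ext i j
  fin_cases i <;> fin_cases j <;> simp [se2Generator, E, Matrix.single]

theorem se2Generator_mul_mul (a b c : ℝ) :
    se2Generator a b c * se2Generator a b c * se2Generator a b c =
      -(c ^ 2) • se2Generator a b c := by
  rw [se2Generator_eq]
  simp only [Matrix.mul_fin_three, Matrix.smul_of, Matrix.smul_cons, Matrix.smul_empty, smul_eq_mul]
  ring_nf

noncomputable def orbitProj (a b c x₀ y₀ θ₀ s : ℝ) : EuclideanSpace ℝ (Fin 2) :=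
  pt ((NormedSpace.exp (s • se2Generator a b c) * M x₀ y₀ θ₀) 0 2)
    ((NormedSpace.exp (s • se2Generator a b c) * M x₀ y₀ θ₀) 1 2)

theorem orbitProj_eq {a b c : ℝ} {α β : ℝ → ℝ} (hα0 : α 0 = 0) (hβ0 : β 0 = 0)
    (hα : ∀ s, HasDerivAt α (1 - c ^ 2 * β s) s) (hβ : ∀ s, HasDerivAt β (α s) s)
    (x₀ y₀ θ₀ s : ℝ) :
    orbitProj a b c x₀ y₀ θ₀ s =
      pt ((1 - β s * c ^ 2) * x₀ - α s * c * y₀ + α s * a - β s * c * b)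
        (α s * c * x₀ + (1 - β s * c ^ 2) * y₀ + α s * b + β s * c * a) := by
  rw [orbitProj, Matrix.exp_smul_eq_of_mul_mul_eq (se2Generator_mul_mul a b c) hα0 hβ0 hα hβ,
    se2Generator_eq]
  congr 1 <;> simp [M, Matrix.mul_apply, Fin.sum_univ_three, Matrix.one_apply] <;> ring

theorem range_orbitProj_of_eq_zero (a b x₀ y₀ θ₀ : ℝ) :
    range (orbitProj a b 0 x₀ y₀ θ₀) =
      pt x₀ y₀ +ᵥ ((ℝ ∙ pt a b : Submodule ℝ (EuclideanSpace ℝ (Fin 2))) : Set _) := by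
  have hα : ∀ s : ℝ, HasDerivAt id (1 - 0 ^ 2 * (s ^ 2 / 2)) s := fun s => by
    simpa using hasDerivAt_id s
  have hβ : ∀ s : ℝ, HasDerivAt (fun u : ℝ => u ^ 2 / 2) (id s) s := fun s => by
    simpa using (hasDerivAt_pow 2 s).div_const 2
  rw [← range_add_smul]
  congr 1
  funext s
  rw [orbitProj_eq (α := id) (β := fun u => u ^ 2 / 2) rfl (by simp) hα hβ]
  ext i
  fin_cases i <;> simp [pt]

open Complex in
theorem orbitProj_eq_of_ne_zero {a b c : ℝ} (hc : c ≠ 0) (x₀ y₀ θ₀ s : ℝ) :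
    orbitProj a b c x₀ y₀ θ₀ s = orthonormalBasisOneI.repr
      (I * (a + b * I) / c +
        Complex.exp (↑(s * c) * I) * (x₀ + y₀ * I - I * (a + b * I) / c)) := by
  have hα : ∀ s : ℝ, HasDerivAt (fun u => Real.sin (u * c) / c)
      (1 - c ^ 2 * ((1 - Real.cos (s * c)) / c ^ 2)) s := fun s =>
    ((hasDerivAt_mul_const c).sin.div_const c).congr_deriv (by field_simp; ring)
  have hβ : ∀ s : ℝ, HasDerivAt (fun u => (1 - Real.cos (u * c)) / c ^ 2)
      (Real.sin (s * c) / c) s := fun s =>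
    (((hasDerivAt_mul_const c).cos.const_sub 1).div_const (c ^ 2)).congr_deriv
      (by field_simp)
  rw [orbitProj_eq (by simp) (by simp) hα hβ]
  -- `orthonormalBasisOneI.repr z` unfolds to `pt z.re z.im`
  change pt _ _ = pt _ _
  congr 1 <;> simp [Complex.exp_re, Complex.exp_im] <;> field_simp <;> ring_nf

open Complex in
theorem range_orbitProj_of_ne_zero {a b c : ℝ} (hc : c ≠ 0) (x₀ y₀ θ₀ : ℝ) :
    range (orbitProj a b c x₀ y₀ θ₀) =
      sphere (orthonormalBasisOneI.repr (I * (a + b * I) / c))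
        ‖x₀ + y₀ * I - I * (a + b * I) / c‖ := by
  rw [funext (orbitProj_eq_of_ne_zero hc x₀ y₀ θ₀), range_comp', range_add_exp_mul_I_mul hc,
    LinearIsometryEquiv.image_sphere]

/-- Trichotomy for projections onto the `(x,y)`-plane of orbits of one-parameter
subgroups of SE(2): exactly one of the following holds — the projection is a point,
a straight line, or a Euclidean circle of positive radius. -/
theorem orbit_projection_trichotomy (a b c x₀ y₀ θ₀ : ℝ)
    (p : ℝ → EuclideanSpace ℝ (Fin 2))
    (hp : ∀ s : ℝ, p s =
      pt ((NormedSpace.exp (s • (a • E 0 2 + b • E 1 2 + c • (E 1 0 - E 0 1))) *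
            M x₀ y₀ θ₀) 0 2)
         ((NormedSpace.exp (s • (a • E 0 2 + b • E 1 2 + c • (E 1 0 - E 0 1))) *
            M x₀ y₀ θ₀) 1 2)) :
    ((∀ s : ℝ, p s = p 0) ∧
      ¬(∃ v : EuclideanSpace ℝ (Fin 2), v ≠ 0 ∧
          Set.range p = pt x₀ y₀ +ᵥ ((ℝ ∙ v : Submodule ℝ (EuclideanSpace ℝ (Fin 2))) :
            Set (EuclideanSpace ℝ (Fin 2)))) ∧
      ¬(∃ (q : EuclideanSpace ℝ (Fin 2)) (r : ℝ), 0 < r ∧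
          Set.range p = Metric.sphere q r)) ∨
    (¬(∀ s : ℝ, p s = p 0) ∧
      (∃ v : EuclideanSpace ℝ (Fin 2), v ≠ 0 ∧
          Set.range p = pt x₀ y₀ +ᵥ ((ℝ ∙ v : Submodule ℝ (EuclideanSpace ℝ (Fin 2))) :
            Set (EuclideanSpace ℝ (Fin 2)))) ∧
      ¬(∃ (q : EuclideanSpace ℝ (Fin 2)) (r : ℝ), 0 < r ∧
          Set.range p = Metric.sphere q r)) ∨
    (¬(∀ s : ℝ, p s = p 0) ∧
      ¬(∃ v : EuclideanSpace ℝ (Fin 2), v ≠ 0 ∧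
          Set.range p = pt x₀ y₀ +ᵥ ((ℝ ∙ v : Submodule ℝ (EuclideanSpace ℝ (Fin 2))) :
            Set (EuclideanSpace ℝ (Fin 2)))) ∧
      (∃ (q : EuclideanSpace ℝ (Fin 2)) (r : ℝ), 0 < r ∧
          Set.range p = Metric.sphere q r)) := by
  have hrange : range p = range (orbitProj a b c x₀ y₀ θ₀) := congrArg range (funext hp)
  refine range_trichotomy p (pt x₀ y₀) ?_
  rw [hrange]
  rcases eq_or_ne c 0 with rfl | hc
  · rw [range_orbitProj_of_eq_zero]
    exact (vadd_span_singleton_subsingleton_or_isLineThrough _ _).imp_right Or.inl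
  · rw [range_orbitProj_of_ne_zero hc]
    exact (sphere_subsingleton_or_isSphere _ _).imp_right Or.inr
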